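/- Let N ≥ 2, K ≥ 2, γ > 0, p > 0, and let y_{k,n} (for k = 1,…,K−1 and n = 1,…,N) satisfy 0 ≤ γ y_{k,n}/p ≤ 1. Define w_{1,n} = 1, w_{k+1,n} = w_{k,n}·exp(γ y_{k,n}/p), W_k = Σ_{n=1}^N w_{k,n}, and q_{k,n} = w_{k,n}/W_k. Then for every expert n ∈ {1,…,N}: Σ_{k=1}^{K−1} y_{k,n} − ((e−2)γ/p)·Σ_{k=1}^{K−1} Σ_{m=1}^N q_{k,m} y_{k,m}² − (p ln N)/γ ≤ Σ_{k=1}^{K−1} Σ_{m=1}^N q_{k,m} y_{k,m}. -/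

import Mathlib

/-! The potential `log W_k` starts at `log N` and, since `W_K ≥ w_{K,n} = exp (γ/p ∑_k y_{k,n})`,
ends above the scaled total reward of any single expert `n`. Each round raises it by at most
`γ/p ⟨q_k, y_k⟩ + (e - 2) (γ/p)² ⟨q_k, y_k²⟩`, because `eˣ ≤ 1 + x + (e - 2) x²` on `[0, 1]`
and `1 + t ≤ eᵗ`. Comparing the two bounds and dividing by `γ/p` gives the claim. -/

open Finset Real

theorem Real.exp_le_one_add_add_mul_sq {x : ℝ} (hx0 : 0 ≤ x) (hx1 : x ≤ 1) :
    exp x ≤ 1 + x + (exp 1 - 2) * x ^ 2 := by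
  have tail (t : ℝ) : exp t - 1 - t = ∑' n : ℕ, t ^ (n + 2) / (n + 2).factorial := by
    have hs := Real.summable_pow_div_factorial t
    rw [exp_eq_exp_ℝ, NormedSpace.exp_eq_tsum_div]
    beta_reduce
    rw [hs.tsum_eq_zero_add, ((summable_nat_add_iff 1).2 hs).tsum_eq_zero_add]
    simp [Nat.factorial]
  have summable (t : ℝ) : Summable fun n : ℕ ↦ t ^ (n + 2) / (n + 2).factorial :=
    (summable_nat_add_iff 2).2 (Real.summable_pow_div_factorial t)
  -- termwise, `x ^ (n + 2) ≤ x ^ 2` on `[0, 1]`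
  have : exp x - 1 - x ≤ x ^ 2 * (exp 1 - 1 - 1) := by
    rw [tail, tail, ← tsum_mul_left]
    refine (summable x).tsum_le_tsum (fun n ↦ ?_) ((summable 1).mul_left _)
    rw [one_pow, mul_one_div]
    gcongr ?_ / _
    exact pow_le_pow_of_le_one hx0 hx1 (by omega : 2 ≤ n + 2)
  linarith

theorem eq_mul_exp_sum_Ico_of_succ {f η : ℕ → ℝ} {a b : ℕ}
    (hf : ∀ k ∈ Ico a b, f (k + 1) = f k * exp (η k)) {k : ℕ} (hak : a ≤ k) (hkb : k ≤ b) :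
    f k = f a * exp (∑ j ∈ Ico a k, η j) := by
  induction k, hak using Nat.le_induction with
  | base => simp
  | succ k hak ih =>
    rw [hf k (mem_Ico.2 ⟨hak, hkb⟩), ih (k.le_succ.trans hkb), sum_Ico_succ_top hak, exp_add,
      mul_assoc]

theorem log_sum_mul_exp_le {ι : Type*} {s : Finset ι} {w x : ι → ℝ} (hs : s.Nonempty)
    (hw : ∀ i ∈ s, 0 < w i) (hx : ∀ i ∈ s, 0 ≤ x i ∧ x i ≤ 1) :
    log (∑ i ∈ s, w i * exp (x i)) ≤
      log (∑ i ∈ s, w i) + ∑ i ∈ s, w i / (∑ j ∈ s, w j) * (x i + (exp 1 - 2) * x i ^ 2) := by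
  set S := ∑ j ∈ s, w j
  set T := ∑ i ∈ s, w i / S * (x i + (exp 1 - 2) * x i ^ 2)
  have hS : 0 < S := sum_pos hw hs
  have hpos : 0 < ∑ i ∈ s, w i * exp (x i) := sum_pos (fun i hi ↦ by have := hw i hi; positivity) hs
  have : ∑ i ∈ s, w i * exp (x i) ≤ S * exp T := calc
    ∑ i ∈ s, w i * exp (x i) ≤ ∑ i ∈ s, w i * (1 + x i + (exp 1 - 2) * x i ^ 2) := by
        gcongr with i hi
        · exact (hw i hi).le
        · exact exp_le_one_add_add_mul_sq (hx i hi).1 (hx i hi).2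
    _ = S + ∑ i ∈ s, w i * (x i + (exp 1 - 2) * x i ^ 2) := by
        rw [← sum_add_distrib]
        exact sum_congr rfl fun i _ ↦ by ring
    _ = S * (1 + T) := by
        rw [mul_add, mul_one, mul_sum]
        congr 1
        exact sum_congr rfl fun i _ ↦ by field_simp
    _ ≤ S * exp T := by gcongr; linarith [add_one_le_exp T]
  calc log (∑ i ∈ s, w i * exp (x i)) ≤ log (S * exp T) := log_le_log hpos this
    _ = log S + T := by rw [log_mul hS.ne' (exp_pos T).ne', log_exp]

theorem sum_le_log_card_add_sum_Ico_of_exp_weights {ι : Type*} [Fintype ι] (i : ι) {a b : ℕ}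
    (hab : a ≤ b) {x w : ℕ → ι → ℝ} (hx : ∀ k ∈ Ico a b, ∀ m, 0 ≤ x k m ∧ x k m ≤ 1)
    (hwa : ∀ m, w a m = 1) (hw : ∀ k ∈ Ico a b, ∀ m, w (k + 1) m = w k m * exp (x k m)) :
    ∑ k ∈ Ico a b, x k i ≤ log (Fintype.card ι) +
      ∑ k ∈ Ico a b, ∑ m, w k m / (∑ j, w k j) * (x k m + (exp 1 - 2) * x k m ^ 2) := by
  have hweight {k : ℕ} (hak : a ≤ k) (hkb : k ≤ b) (m : ι) :
      w k m = exp (∑ j ∈ Ico a k, x j m) := by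
    simpa [hwa] using eq_mul_exp_sum_Ico_of_succ (f := (w · m)) (fun j hj ↦ hw j hj m) hak hkb
  have hpos {k : ℕ} (hak : a ≤ k) (hkb : k ≤ b) (m : ι) : 0 < w k m :=
    hweight hak hkb m ▸ exp_pos _
  have hstep (k : ℕ) (hk : k ∈ Ico a b) : log (∑ m, w (k + 1) m) - log (∑ m, w k m) ≤
      ∑ m, w k m / (∑ j, w k j) * (x k m + (exp 1 - 2) * x k m ^ 2) := by
    obtain ⟨hak, hkb⟩ := mem_Ico.1 hk
    have := log_sum_mul_exp_le ⟨i, mem_univ i⟩ (fun m _ ↦ hpos hak hkb.le m) (fun m _ ↦ hx k hk m)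
    simp only [hw k hk]
    linarith
  have hlower : ∑ k ∈ Ico a b, x k i ≤ log (∑ m, w b m) := by
    rw [← log_exp (∑ k ∈ Ico a b, x k i), ← hweight hab le_rfl i]
    exact log_le_log (hpos hab le_rfl i)
      (single_le_sum (fun m _ ↦ (hpos hab le_rfl m).le) (mem_univ i))
  have hupper := sum_Ico_sub (fun k ↦ log (∑ m, w k m)) hab ▸ sum_le_sum hstep
  simp only [hwa, sum_const, card_univ, nsmul_eq_mul, mul_one] at hupper
  linarith

theorem exp4_combined_weight_bound_general (N K : ℕ) (hK : 2 ≤ K)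
    (γ p : ℝ) (hγ : 0 < γ) (hp : 0 < p)
    (y : ℕ → Fin N → ℝ)
    (hy : ∀ k ∈ Finset.Ico 1 K, ∀ n, 0 ≤ γ * y k n / p ∧ γ * y k n / p ≤ 1)
    (w : ℕ → Fin N → ℝ)
    (hw1 : ∀ n, w 1 n = 1)
    (hwrec : ∀ k ∈ Finset.Ico 1 K, ∀ n, w (k + 1) n = w k n * Real.exp (γ * y k n / p))
    (W : ℕ → ℝ) (hW : ∀ k, W k = ∑ n, w k n)
    (q : ℕ → Fin N → ℝ) (hq : ∀ k n, q k n = w k n / W k) :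
    ∀ n : Fin N,
      (∑ k ∈ Finset.Ico 1 K, y k n)
          - ((Real.exp 1 - 2) * γ / p) * ∑ k ∈ Finset.Ico 1 K, ∑ m, q k m * y k m ^ 2
          - p * Real.log N / γ
        ≤ ∑ k ∈ Finset.Ico 1 K, ∑ m, q k m * y k m := by
  intro n
  have hbound := sum_le_log_card_add_sum_Ico_of_exp_weights n (by omega : 1 ≤ K) hy hw1 hwrec
  simp only [Fintype.card_fin, ← hW, ← hq] at hbound
  have hgain : ∑ k ∈ Ico 1 K, γ * y k n / p = γ / p * ∑ k ∈ Ico 1 K, y k n := by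
    rw [mul_sum]
    exact sum_congr rfl fun k _ ↦ by ring
  have hloss : ∑ k ∈ Ico 1 K, ∑ m, q k m * (γ * y k m / p + (exp 1 - 2) * (γ * y k m / p) ^ 2) =
      γ / p * (∑ k ∈ Ico 1 K, ∑ m, q k m * y k m
        + (exp 1 - 2) * γ / p * ∑ k ∈ Ico 1 K, ∑ m, q k m * y k m ^ 2) := by
    simp only [mul_add, mul_sum, ← sum_add_distrib]
    exact sum_congr rfl fun k _ ↦ sum_congr rfl fun m _ ↦ by ring
  rw [hgain, hloss] at hbound
  refine le_of_mul_le_mul_left ?_ (div_pos hγ hp)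
  rw [mul_sub, mul_sub, show γ / p * (p * log N / γ) = log N by field_simp]
  linarith

theorem exp4_combined_weight_bound (N K : ℕ) (hN : 2 ≤ N) (hK : 2 ≤ K)
    (γ p : ℝ) (hγ : 0 < γ) (hp : 0 < p)
    (y : ℕ → Fin N → ℝ)
    (hy : ∀ k ∈ Finset.Ico 1 K, ∀ n, 0 ≤ γ * y k n / p ∧ γ * y k n / p ≤ 1)
    (w : ℕ → Fin N → ℝ)
    (hw1 : ∀ n, w 1 n = 1)
    (hwrec : ∀ k ∈ Finset.Ico 1 K, ∀ n, w (k + 1) n = w k n * Real.exp (γ * y k n / p))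
    (W : ℕ → ℝ) (hW : ∀ k, W k = ∑ n, w k n)
    (q : ℕ → Fin N → ℝ) (hq : ∀ k n, q k n = w k n / W k) :
    ∀ n : Fin N,
      (∑ k ∈ Finset.Ico 1 K, y k n)
          - ((Real.exp 1 - 2) * γ / p) * ∑ k ∈ Finset.Ico 1 K, ∑ m, q k m * y k m ^ 2
          - p * Real.log N / γ
        ≤ ∑ k ∈ Finset.Ico 1 K, ∑ m, q k m * y k m :=
  exp4_combined_weight_bound_general N K hK γ p hγ hp y hy w hw1 hwrec W hW q hq
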